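/- Let P_Hardy be the behaviour in the (2,2,2,2) Bell scenario determined by ⟨A₀⟩ = ⟨B₀⟩ = 5 − 2√5, ⟨A₁⟩ = ⟨B₁⟩ = √5 − 2, ⟨A₀B₀⟩ = 6√5 − 13, ⟨A₀B₁⟩ = ⟨A₁B₀⟩ = 3√5 − 6, ⟨A₁B₁⟩ = 2√5 − 5 (probabilities recovered via P(ab|xy) = (1 + (−1)^a⟨A_x⟩ + (−1)^b⟨B_y⟩ + (−1)^{a+b}⟨A_xB_y⟩)/4). Then: (i) P_Hardy ∈ Q, realised by the two-qubit state |ψ⟩ = √((1−α²)/2)(|01⟩ + |10⟩) + α|11⟩ with α = √(√5 − 2) and observables A₀ = B₀ = 2α·σ_x + √(1 − 4α²)·σ_z, A₁ = B₁ = −σ_z; (ii) P_Hardy(11|11) = 0, P_Hardy(10|01) = 0 and P_Hardy(01|10) = 0; and (iii) P_Hardy ∉ L, since its CHSH value ⟨A₀B₀⟩ + ⟨A₀B₁⟩ + ⟨A₁B₀⟩ − ⟨A₁B₁⟩ = 10√5 − 20 > 2. -/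

import Mathlib

open Matrix Kronecker ComplexOrder BigOperators

/-- A behaviour in the (2,2,2,2) Bell scenario: `P a b x y = P(ab|xy)`. -/
abbrev Behaviour : Type := Fin 2 → Fin 2 → Fin 2 → Fin 2 → ℝ

/-- `P` admits a quantum realisation of local dimension `d`. -/
def HasRealisation (d : ℕ) (P : Behaviour) : Prop :=
  ∃ (ρ : Matrix (Fin d × Fin d) (Fin d × Fin d) ℂ)
    (E F : Fin 2 → Fin 2 → Matrix (Fin d) (Fin d) ℂ),
    ρ.PosSemidef ∧ ρ.trace = 1 ∧
    (∀ x a, (E x a).PosSemidef) ∧ (∀ y b, (F y b).PosSemidef) ∧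
    (∀ x, ∑ a, E x a = 1) ∧ (∀ y, ∑ b, F y b = 1) ∧
    ∀ a b x y, (P a b x y : ℂ) = ((E x a ⊗ₖ F y b) * ρ).trace

def Qfinite : Set Behaviour := {P | ∃ d : ℕ, 0 < d ∧ HasRealisation d P}

def Q : Set Behaviour := closure Qfinite

def detBehaviour (f g : Fin 2 → Fin 2) : Behaviour :=
  fun a b x y => if a = f x ∧ b = g y then 1 else 0

def L : Set Behaviour := convexHull ℝ {P | ∃ f g, P = detBehaviour f g}

def NS : Set Behaviour :=
  {P | (∀ a b x y, 0 ≤ P a b x y) ∧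
       (∀ x y : Fin 2, ∑ a : Fin 2, ∑ b : Fin 2, P a b x y = 1) ∧
       (∀ (a x y y' : Fin 2), ∑ b : Fin 2, P a b x y = ∑ b : Fin 2, P a b x y') ∧
       (∀ (b x x' y : Fin 2), ∑ a : Fin 2, P a b x y = ∑ a : Fin 2, P a b x' y)}

def margA (P : Behaviour) (x : Fin 2) : ℝ :=
  ∑ a : Fin 2, ∑ b : Fin 2, (-1 : ℝ) ^ (a : ℕ) * P a b x 0

def margB (P : Behaviour) (y : Fin 2) : ℝ :=
  ∑ a : Fin 2, ∑ b : Fin 2, (-1 : ℝ) ^ (b : ℕ) * P a b 0 y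

def corr (P : Behaviour) (x y : Fin 2) : ℝ :=
  ∑ a : Fin 2, ∑ b : Fin 2, (-1 : ℝ) ^ ((a : ℕ) + (b : ℕ)) * P a b x y

def chsh (P : Behaviour) : ℝ := corr P 0 0 + corr P 0 1 + corr P 1 0 - corr P 1 1

def bell (B P : Behaviour) : ℝ := ∑ a : Fin 2, ∑ b : Fin 2, ∑ x : Fin 2, ∑ y : Fin 2, B a b x y * P a b x y

noncomputable def beta (B : Behaviour) (S : Set Behaviour) : ℝ := sSup (bell B '' S)

def face (B : Behaviour) (S : Set Behaviour) : Set Behaviour :=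
  {P ∈ S | bell B P = beta B S}

/-- Reconstruct a behaviour from marginals and correlators. -/
noncomputable def fromCorr (mA mB : Fin 2 → ℝ) (c : Fin 2 → Fin 2 → ℝ) : Behaviour :=
  fun a b x y =>
    (1 + (-1 : ℝ) ^ (a : ℕ) * mA x + (-1 : ℝ) ^ (b : ℕ) * mB y
      + (-1 : ℝ) ^ ((a : ℕ) + (b : ℕ)) * c x y) / 4


/-- The Hardy point, given by its marginals and correlators. -/
noncomputable def PHardy : Behaviour :=
  fromCorr ![5 - 2 * Real.sqrt 5, Real.sqrt 5 - 2]
    ![5 - 2 * Real.sqrt 5, Real.sqrt 5 - 2]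
    ![![6 * Real.sqrt 5 - 13, 3 * Real.sqrt 5 - 6],
      ![3 * Real.sqrt 5 - 6, 2 * Real.sqrt 5 - 5]]

noncomputable def alphaH : ℝ := Real.sqrt (Real.sqrt 5 - 2)

/-- The Hardy state `√((1−α²)/2)(|01⟩ + |10⟩) + α|11⟩` with `α = √(√5 − 2)`. -/
noncomputable def psiH : Fin 2 × Fin 2 → ℂ := fun p =>
  if p = (0, 0) then 0
  else if p = (1, 1) then (alphaH : ℂ)
  else (Real.sqrt ((1 - alphaH ^ 2) / 2) : ℂ)

noncomputable def rhoH : Matrix (Fin 2 × Fin 2) (Fin 2 × Fin 2) ℂ :=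
  Matrix.vecMulVec psiH (star psiH)

def sigmaX : Matrix (Fin 2) (Fin 2) ℂ := !![0, 1; 1, 0]
def sigmaZ : Matrix (Fin 2) (Fin 2) ℂ := !![1, 0; 0, -1]

/-- The Hardy observables `A₀ = B₀ = 2α σ_x + √(1 − 4α²) σ_z`, `A₁ = B₁ = −σ_z`. -/
noncomputable def obsH : Fin 2 → Matrix (Fin 2) (Fin 2) ℂ :=
  ![(2 * alphaH : ℂ) • sigmaX + (Real.sqrt (1 - 4 * alphaH ^ 2) : ℂ) • sigmaZ, -sigmaZ]

/-- Measurement operators of a binary observable: `E_a = (1 + (−1)^a A)/2`. -/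
noncomputable def measOp (A : Matrix (Fin 2) (Fin 2) ℂ) (a : Fin 2) :
    Matrix (Fin 2) (Fin 2) ℂ :=
  (1 / 2 : ℂ) • (1 + ((-1 : ℂ) ^ (a : ℕ)) • A)


/-!
For a binary observable with `A² = 1` the operators `(1 ± A)/2` are Hermitian projections, and
the Born rule expresses `P(ab|xy)` through `⟨A_x ⊗ 1⟩`, `⟨1 ⊗ B_y⟩` and `⟨A_x ⊗ B_y⟩`. The Hardy
state is real and symmetric, so for observables `u σ_x + v σ_z` these expectation values are
polynomials in `u, v` and the two amplitudes; the choice `α² = √5 - 2` turns them into the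
stated correlators. Nonlocality: a deterministic behaviour has CHSH value
`s₀t₀ + s₀t₁ + s₁t₀ - s₁t₁ ≤ 2` with `sᵢ, tⱼ = ±1`, `chsh` is linear, and `10√5 - 20 > 2`.
-/

section BinaryObservable

variable {A : Matrix (Fin 2) (Fin 2) ℂ}

theorem sum_measOp (A : Matrix (Fin 2) (Fin 2) ℂ) : ∑ a, measOp A a = 1 := by
  simp only [Fin.sum_univ_two, measOp, ← smul_add]
  norm_num
  module

theorem measOp_isHermitian (hA : A.IsHermitian) (a : Fin 2) : (measOp A a).IsHermitian := by
  rw [IsHermitian, measOp, conjTranspose_smul, conjTranspose_add, conjTranspose_one,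
    conjTranspose_smul, hA.eq]
  simp only [star_div₀, star_pow, star_neg, star_one, star_ofNat]

theorem measOp_mul_self (hA2 : A * A = 1) (a : Fin 2) :
    measOp A a * measOp A a = measOp A a := by
  have hsign : (-1 : ℂ) ^ (a : ℕ) * (-1) ^ (a : ℕ) = 1 := by rw [← mul_pow]; norm_num
  simp only [measOp, smul_mul_smul_comm, add_mul, mul_add, one_mul, mul_one, hA2]
  linear_combination (norm := module) ((1 / 4 : ℂ) • hsign) • (1 : Matrix (Fin 2) (Fin 2) ℂ)

theorem measOp_posSemidef (hA : A.IsHermitian) (hA2 : A * A = 1) (a : Fin 2) :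
    (measOp A a).PosSemidef := by
  have h : measOp A a = (measOp A a)ᴴ * measOp A a := by
    rw [(measOp_isHermitian hA a).eq, measOp_mul_self hA2]
  rw [h]
  exact posSemidef_conjTranspose_mul_self _

theorem trace_kronecker_measOp_mul (A B : Matrix (Fin 2) (Fin 2) ℂ)
    (ρ : Matrix (Fin 2 × Fin 2) (Fin 2 × Fin 2) ℂ) (a b : Fin 2) :
    ((measOp A a ⊗ₖ measOp B b) * ρ).trace =
      (ρ.trace + (-1) ^ (a : ℕ) * ((A ⊗ₖ 1) * ρ).trace + (-1) ^ (b : ℕ) * ((1 ⊗ₖ B) * ρ).trace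
        + (-1) ^ ((a : ℕ) + (b : ℕ)) * ((A ⊗ₖ B) * ρ).trace) / 4 := by
  simp only [measOp, smul_kronecker, kronecker_smul, add_kronecker, kronecker_add,
    one_kronecker_one, add_mul, smul_mul, one_mul, trace_add, trace_smul, smul_eq_mul]
  ring

theorem hasRealisation_of_observables {P : Behaviour}
    {ρ : Matrix (Fin 2 × Fin 2) (Fin 2 × Fin 2) ℂ} (hρ : ρ.PosSemidef) (hρ1 : ρ.trace = 1)
    {A B : Fin 2 → Matrix (Fin 2) (Fin 2) ℂ} (hA : ∀ x, (A x).IsHermitian)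
    (hA2 : ∀ x, A x * A x = 1) (hB : ∀ y, (B y).IsHermitian) (hB2 : ∀ y, B y * B y = 1)
    (hP : ∀ a b x y, (P a b x y : ℂ) = ((measOp (A x) a ⊗ₖ measOp (B y) b) * ρ).trace) :
    HasRealisation 2 P :=
  ⟨ρ, fun x a => measOp (A x) a, fun y b => measOp (B y) b, hρ, hρ1,
    fun x => measOp_posSemidef (hA x) (hA2 x), fun y => measOp_posSemidef (hB y) (hB2 y),
    fun x => sum_measOp (A x), fun y => sum_measOp (B y), hP⟩

end BinaryObservable

section QubitObservable

def qubitObs (u v : ℝ) : Matrix (Fin 2) (Fin 2) ℂ := (u : ℂ) • sigmaX + (v : ℂ) • sigmaZ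

theorem qubitObs_eq (u v : ℝ) : qubitObs u v = !![(v : ℂ), u; u, -v] := by
  ext i j; fin_cases i <;> fin_cases j <;> simp [qubitObs, sigmaX, sigmaZ]

theorem qubitObs_isHermitian (u v : ℝ) : (qubitObs u v).IsHermitian := by
  rw [qubitObs_eq]
  ext i j; fin_cases i <;> fin_cases j <;> simp

theorem qubitObs_mul_self {u v : ℝ} (h : u ^ 2 + v ^ 2 = 1) :
    qubitObs u v * qubitObs u v = 1 := by
  have h' : (u : ℂ) ^ 2 + (v : ℂ) ^ 2 = 1 := by exact_mod_cast h
  rw [qubitObs_eq, mul_fin_two, one_fin_two]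
  ext i j; fin_cases i <;> fin_cases j <;> simp
  · linear_combination h'
  · ring
  · ring
  · linear_combination h'

end QubitObservable

section HardyFamily

/-- The vector `β (|01⟩ + |10⟩) + α |11⟩`. -/
def hardyVec (β α : ℝ) : Fin 2 × Fin 2 → ℂ := fun p =>
  if p = (0, 0) then 0 else if p = (1, 1) then (α : ℂ) else (β : ℂ)

variable (β α : ℝ)

theorem star_hardyVec : star (hardyVec β α) = hardyVec β α := by
  ext p; simp only [hardyVec, Pi.star_apply]; split_ifs <;> simp

theorem trace_mul_vecMulVec_hardyVec (M : Matrix (Fin 2 × Fin 2) (Fin 2 × Fin 2) ℂ) :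
    (M * vecMulVec (hardyVec β α) (star (hardyVec β α))).trace =
      (M *ᵥ hardyVec β α) ⬝ᵥ hardyVec β α := by
  rw [mul_vecMulVec, trace_vecMulVec, star_hardyVec]

theorem trace_vecMulVec_hardyVec :
    (vecMulVec (hardyVec β α) (star (hardyVec β α))).trace = ((2 * β ^ 2 + α ^ 2 : ℝ) : ℂ) := by
  rw [trace_vecMulVec, star_hardyVec]
  simp [dotProduct, Fintype.sum_prod_type, hardyVec]
  ring

theorem trace_qubitObs_kronecker_one_mul (u v : ℝ) :
    ((qubitObs u v ⊗ₖ 1) * vecMulVec (hardyVec β α) (star (hardyVec β α))).trace =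
      ((2 * α * β * u - α ^ 2 * v : ℝ) : ℂ) := by
  rw [trace_mul_vecMulVec_hardyVec, qubitObs_eq]
  simp [dotProduct, mulVec, Fintype.sum_prod_type, hardyVec, one_apply]
  ring

theorem trace_one_kronecker_qubitObs_mul (u v : ℝ) :
    ((1 ⊗ₖ qubitObs u v) * vecMulVec (hardyVec β α) (star (hardyVec β α))).trace =
      ((2 * α * β * u - α ^ 2 * v : ℝ) : ℂ) := by
  rw [trace_mul_vecMulVec_hardyVec, qubitObs_eq]
  simp [dotProduct, mulVec, Fintype.sum_prod_type, hardyVec, one_apply]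
  ring

theorem trace_qubitObs_kronecker_qubitObs_mul (u v u' v' : ℝ) :
    ((qubitObs u v ⊗ₖ qubitObs u' v') * vecMulVec (hardyVec β α) (star (hardyVec β α))).trace =
      ((2 * β ^ 2 * u * u' - 2 * α * β * (u * v' + v * u')
        + (α ^ 2 - 2 * β ^ 2) * v * v' : ℝ) : ℂ) := by
  rw [trace_mul_vecMulVec_hardyVec, qubitObs_eq, qubitObs_eq]
  simp [dotProduct, mulVec, Fintype.sum_prod_type, hardyVec]
  ring

end HardyFamily

section HardyPoint

theorem sqrt_five_sq : √5 ^ 2 = 5 := Real.sq_sqrt (by norm_num)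

theorem two_lt_sqrt_five : 2 < √5 := by
  rw [Real.lt_sqrt (by norm_num)]; norm_num

theorem alphaH_sq : alphaH ^ 2 = √5 - 2 := Real.sq_sqrt (by linarith [two_lt_sqrt_five])

theorem sqrt_one_sub_four_mul_alphaH_sq : √(1 - 4 * alphaH ^ 2) = √5 - 2 := by
  rw [alphaH_sq, show 1 - 4 * (√5 - 2) = (√5 - 2) ^ 2 by linear_combination -sqrt_five_sq]
  exact Real.sqrt_sq (by linarith [two_lt_sqrt_five])

theorem sqrt_one_sub_alphaH_sq_div_two : √((1 - alphaH ^ 2) / 2) = (√5 - 1) / 2 := by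
  rw [alphaH_sq,
    show (1 - (√5 - 2)) / 2 = ((√5 - 1) / 2) ^ 2 by linear_combination -sqrt_five_sq / 4]
  exact Real.sqrt_sq (by linarith [two_lt_sqrt_five])

theorem obsH_apply (x : Fin 2) :
    obsH x = qubitObs (![2 * alphaH, 0] x) (![√5 - 2, -1] x) := by
  fin_cases x
  · simp [obsH, qubitObs, sqrt_one_sub_four_mul_alphaH_sq]
  · ext i j; fin_cases i <;> fin_cases j <;> simp [obsH, qubitObs, sigmaX, sigmaZ]

theorem obsH_isHermitian (x : Fin 2) : (obsH x).IsHermitian := by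
  rw [obsH_apply]; exact qubitObs_isHermitian _ _

theorem obsH_mul_self (x : Fin 2) : obsH x * obsH x = 1 := by
  rw [obsH_apply]
  apply qubitObs_mul_self
  fin_cases x <;> simp only [Fin.zero_eta, Fin.mk_one, cons_val_zero, cons_val_one]
  · linear_combination 4 * alphaH_sq + sqrt_five_sq
  · norm_num

theorem rhoH_eq :
    rhoH = vecMulVec (hardyVec ((√5 - 1) / 2) alphaH) (star (hardyVec ((√5 - 1) / 2) alphaH)) := by
  rw [← sqrt_one_sub_alphaH_sq_div_two]; rfl

theorem rhoH_posSemidef : rhoH.PosSemidef := posSemidef_vecMulVec_self_star psiH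

theorem hardy_norm : 2 * ((√5 - 1) / 2) ^ 2 + alphaH ^ 2 = 1 := by
  linear_combination alphaH_sq + sqrt_five_sq / 2

theorem rhoH_trace : rhoH.trace = 1 := by
  rw [rhoH_eq, trace_vecMulVec_hardyVec, hardy_norm, Complex.ofReal_one]

-- Each identity is linear in `α²`: the coefficient of `alphaH_sq` removes `α²`, leaving a
-- polynomial in `√5` that is a multiple of `√5 ^ 2 - 5`.
theorem hardy_marginal (x : Fin 2) :
    2 * alphaH * ((√5 - 1) / 2) * ![2 * alphaH, 0] x - alphaH ^ 2 * ![√5 - 2, -1] x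
      = ![5 - 2 * √5, √5 - 2] x := by
  fin_cases x <;> simp only [Fin.zero_eta, Fin.mk_one, cons_val_zero, cons_val_one]
  · linear_combination √5 * alphaH_sq + sqrt_five_sq
  · linear_combination alphaH_sq

theorem hardy_correlator (x y : Fin 2) :
    2 * ((√5 - 1) / 2) ^ 2 * ![2 * alphaH, 0] x * ![2 * alphaH, 0] y
      - 2 * alphaH * ((√5 - 1) / 2) * (![2 * alphaH, 0] x * ![√5 - 2, -1] y
        + ![√5 - 2, -1] x * ![2 * alphaH, 0] y)
      + (alphaH ^ 2 - 2 * ((√5 - 1) / 2) ^ 2) * ![√5 - 2, -1] x * ![√5 - 2, -1] y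
      = ![![6 * √5 - 13, 3 * √5 - 6], ![3 * √5 - 6, 2 * √5 - 5]] x y := by
  fin_cases x <;> fin_cases y <;>
    simp only [Fin.zero_eta, Fin.mk_one, cons_val_zero, cons_val_one]
  · linear_combination (-√5 ^ 2 + 4 * √5 - 2) * alphaH_sq
      + (-√5 ^ 2 / 2 + 2 * √5 - 3) * sqrt_five_sq
  · linear_combination √5 * alphaH_sq + (√5 - 2) / 2 * sqrt_five_sq
  · linear_combination √5 * alphaH_sq + (√5 - 2) / 2 * sqrt_five_sq
  · linear_combination alphaH_sq - sqrt_five_sq / 2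

theorem PHardy_eq_trace (a b x y : Fin 2) :
    (PHardy a b x y : ℂ) = ((measOp (obsH x) a ⊗ₖ measOp (obsH y) b) * rhoH).trace := by
  rw [trace_kronecker_measOp_mul, obsH_apply, obsH_apply, rhoH_eq, trace_vecMulVec_hardyVec,
    trace_qubitObs_kronecker_one_mul, trace_one_kronecker_qubitObs_mul,
    trace_qubitObs_kronecker_qubitObs_mul, hardy_norm, hardy_marginal, hardy_marginal,
    hardy_correlator]
  simp only [PHardy, fromCorr]
  push_cast
  ring

theorem PHardy_hardy_constraints : PHardy 1 1 1 1 = 0 ∧ PHardy 1 0 0 1 = 0 ∧ PHardy 0 1 1 0 = 0 := by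
  refine ⟨?_, ?_, ?_⟩ <;> norm_num [PHardy, fromCorr] <;> ring

theorem chsh_PHardy : chsh PHardy = 10 * √5 - 20 := by
  simp [chsh, corr, PHardy, fromCorr, Fin.sum_univ_two]
  ring

end HardyPoint

section CHSH

theorem corr_detBehaviour (f g : Fin 2 → Fin 2) (x y : Fin 2) :
    corr (detBehaviour f g) x y = (-1) ^ (f x : ℕ) * (-1) ^ (g y : ℕ) := by
  simp [corr, detBehaviour, ite_and, pow_add]

theorem chsh_detBehaviour_le_two (f g : Fin 2 → Fin 2) : chsh (detBehaviour f g) ≤ 2 := by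
  simp only [chsh, corr_detBehaviour]
  rcases neg_one_pow_eq_or ℝ (f 0 : ℕ) with h0 | h0 <;>
    rcases neg_one_pow_eq_or ℝ (f 1 : ℕ) with h1 | h1 <;>
    rcases neg_one_pow_eq_or ℝ (g 0 : ℕ) with h2 | h2 <;>
    rcases neg_one_pow_eq_or ℝ (g 1 : ℕ) with h3 | h3 <;>
    rw [h0, h1, h2, h3] <;> norm_num

theorem chsh_isLinearMap : IsLinearMap ℝ chsh := by
  constructor
  · intro P P'
    simp only [chsh, corr, Pi.add_apply, mul_add, Finset.sum_add_distrib]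
    ring
  · intro c P
    simp only [chsh, corr, Pi.smul_apply, smul_eq_mul, mul_left_comm _ c, ← Finset.mul_sum]
    ring

theorem chsh_le_two_of_mem_L {P : Behaviour} (hP : P ∈ L) : chsh P ≤ 2 := by
  refine convexHull_min ?_ (convex_halfSpace_le chsh_isLinearMap 2) hP
  rintro _ ⟨f, g, rfl⟩
  exact chsh_detBehaviour_le_two f g

end CHSH

/-- **Properties of the Hardy point:** (i) it is realised by the explicit two-qubit
Hardy state and observables, hence belongs to `Q`; (ii) it satisfies the three Hardy
zero constraints `P(11|11) = P(10|01) = P(01|10) = 0`; (iii) its CHSH value is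
`10√5 − 20 > 2`, hence it is nonlocal. -/
theorem hardy_point_properties :
    (∀ a b x y : Fin 2, (PHardy a b x y : ℂ) =
      ((measOp (obsH x) a ⊗ₖ measOp (obsH y) b) * rhoH).trace) ∧
    PHardy ∈ Q ∧
    PHardy 1 1 1 1 = 0 ∧ PHardy 1 0 0 1 = 0 ∧ PHardy 0 1 1 0 = 0 ∧
    chsh PHardy = 10 * Real.sqrt 5 - 20 ∧
    (2 : ℝ) < 10 * Real.sqrt 5 - 20 ∧
    PHardy ∉ L := by
  have hviolation : (2 : ℝ) < 10 * √5 - 20 := by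
    have : 11 / 5 < √5 := by rw [Real.lt_sqrt (by norm_num)]; norm_num
    linarith
  have hrealisation : HasRealisation 2 PHardy :=
    hasRealisation_of_observables rhoH_posSemidef rhoH_trace obsH_isHermitian obsH_mul_self
      obsH_isHermitian obsH_mul_self PHardy_eq_trace
  refine ⟨PHardy_eq_trace, subset_closure ⟨2, two_pos, hrealisation⟩, PHardy_hardy_constraints.1,
    PHardy_hardy_constraints.2.1, PHardy_hardy_constraints.2.2, chsh_PHardy, hviolation, fun hL => ?_⟩
  linarith [chsh_le_two_of_mem_L hL, chsh_PHardy]
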